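/- arXiv:1804.04385 — 3 statements merged into one kernel-verified Lean document; each statement's English description precedes it below -/
import Mathlib

section
/- Let N ≥ 1, let (Δx_i)_{i=1}^N be positive with ∑_{i=1}^N Δx_i = b − a, and let (ρ_i), (η_i) be nonnegative with ∑ Δx_i ρ_i = m₁ and ∑ Δx_i η_i = m₂. Let W₁, W₂ : ℝ → ℝ be C¹ with bounded derivatives, and for points x_i and intervals C_j of length Δx_j define dV_{i+1/2} = −∑_j ∫_{C_j} [(W₁(x_{i+1}−y) − W₁(x_i−y)) ρ_j + (W₂(x_{i+1}−y) − W₂(x_i−y)) η_j] / (x_{i+1} − x_i) dy. Then |dV_{i+1/2}| ≤ ‖W₁'‖_∞ m₁ + ‖W₂'‖_∞ m₂ for all i, and hence ∑_{i=1}^{N-1} Δx_{i+1/2} |dV_{i+1/2}|² ≤ (b − a)(‖W₁'‖_∞ m₁ + ‖W₂'‖_∞ m₂)². -/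
open Real MeasureTheory

lemma mvt_abs_bound (W : ℝ → ℝ) (hW : Differentiable ℝ W) (K : ℝ)
    (hK : ∀ y, |deriv W y| ≤ K) (p q : ℝ) : |W p - W q| ≤ K * |p - q| := by
  have := Convex.norm_image_sub_le_of_norm_deriv_le
    (f := W) (s := Set.univ) (fun z _ => hW z) (fun z _ => hK z)
    convex_univ (Set.mem_univ q) (Set.mem_univ p)
  simpa [Real.norm_eq_abs] using this

/-- `L^∞` bound on the discrete non-local velocity field: with masses `m₁, m₂` and
interaction kernels `W₁, W₂` having derivatives bounded by `K₁, K₂`, the discrete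
velocity `dV_{i+1/2}` satisfies `|dV_{i+1/2}| ≤ K₁ m₁ + K₂ m₂`, and hence
`∑ Δx_{i+1/2} |dV_{i+1/2}|² ≤ (b − a)(K₁ m₁ + K₂ m₂)²`. -/
theorem stmt_5 (N : ℕ) (hN : 1 ≤ N) (a b m₁ m₂ : ℝ)
    (Δx : ℕ → ℝ) (hΔx : ∀ i ∈ Finset.range N, 0 < Δx i)
    (hsum : ∑ i ∈ Finset.range N, Δx i = b - a)
    (ρ η : ℕ → ℝ) (hρ : ∀ i, 0 ≤ ρ i) (hη : ∀ i, 0 ≤ η i)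
    (hm₁ : ∑ i ∈ Finset.range N, Δx i * ρ i = m₁)
    (hm₂ : ∑ i ∈ Finset.range N, Δx i * η i = m₂)
    (W₁ W₂ : ℝ → ℝ) (hW₁ : Differentiable ℝ W₁) (hW₂ : Differentiable ℝ W₂)
    (K₁ K₂ : ℝ) (hK₁ : ∀ y, |deriv W₁ y| ≤ K₁) (hK₂ : ∀ y, |deriv W₂ y| ≤ K₂)
    (x : ℕ → ℝ) (hx : ∀ i, x i < x (i + 1))
    (c : ℕ → ℝ)
    (hxsum : ∑ i ∈ Finset.range (N - 1), (x (i + 1) - x i) ≤ b - a)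
    (dV : ℕ → ℝ)
    (hdV : ∀ i, dV i =
      -(∑ j ∈ Finset.range N, ∫ y in (c j)..(c j + Δx j),
        ((W₁ (x (i + 1) - y) - W₁ (x i - y)) * ρ j
          + (W₂ (x (i + 1) - y) - W₂ (x i - y)) * η j) / (x (i + 1) - x i))) :
    (∀ i, |dV i| ≤ K₁ * m₁ + K₂ * m₂) ∧
    ∑ i ∈ Finset.range (N - 1), (x (i + 1) - x i) * (dV i) ^ 2 ≤
      (b - a) * (K₁ * m₁ + K₂ * m₂) ^ 2 := by
  have hbound : ∀ i, |dV i| ≤ K₁ * m₁ + K₂ * m₂ := by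
    intro i
    rw [hdV i, abs_neg]
    have hxi : 0 < x (i + 1) - x i := sub_pos.2 (hx i)
    calc |∑ j ∈ Finset.range N, ∫ y in (c j)..(c j + Δx j),
        ((W₁ (x (i + 1) - y) - W₁ (x i - y)) * ρ j
          + (W₂ (x (i + 1) - y) - W₂ (x i - y)) * η j) / (x (i + 1) - x i)|
        ≤ ∑ j ∈ Finset.range N, |∫ y in (c j)..(c j + Δx j),
        ((W₁ (x (i + 1) - y) - W₁ (x i - y)) * ρ j
          + (W₂ (x (i + 1) - y) - W₂ (x i - y)) * η j) / (x (i + 1) - x i)| :=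
        Finset.abs_sum_le_sum_abs _ _
      _ ≤ ∑ j ∈ Finset.range N, (K₁ * ρ j + K₂ * η j) * Δx j := by
          apply Finset.sum_le_sum
          intro j hj
          have hΔ := hΔx j hj
          have key : |∫ y in (c j)..(c j + Δx j),
              ((W₁ (x (i + 1) - y) - W₁ (x i - y)) * ρ j
                + (W₂ (x (i + 1) - y) - W₂ (x i - y)) * η j) / (x (i + 1) - x i)|
              ≤ (K₁ * ρ j + K₂ * η j) * |c j + Δx j - c j| := by
            rw [← Real.norm_eq_abs]
            apply intervalIntegral.norm_integral_le_of_norm_le_const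
            intro y _
            rw [Real.norm_eq_abs, abs_div, abs_of_pos hxi, div_le_iff₀ hxi]
            calc |(W₁ (x (i + 1) - y) - W₁ (x i - y)) * ρ j
                  + (W₂ (x (i + 1) - y) - W₂ (x i - y)) * η j|
                ≤ |W₁ (x (i + 1) - y) - W₁ (x i - y)| * ρ j
                  + |W₂ (x (i + 1) - y) - W₂ (x i - y)| * η j := by
                  refine (abs_add_le _ _).trans ?_
                  rw [abs_mul, abs_mul, abs_of_nonneg (hρ j), abs_of_nonneg (hη j)]
              _ ≤ (K₁ * (x (i + 1) - x i)) * ρ j + (K₂ * (x (i + 1) - x i)) * η j := by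
                  gcongr
                  · exact hρ j
                  · have := mvt_abs_bound W₁ hW₁ K₁ hK₁ (x (i + 1) - y) (x i - y)
                    simpa [abs_of_pos hxi, sub_sub_sub_cancel_right] using this
                  · exact hη j
                  · have := mvt_abs_bound W₂ hW₂ K₂ hK₂ (x (i + 1) - y) (x i - y)
                    simpa [abs_of_pos hxi, sub_sub_sub_cancel_right] using this
              _ = (K₁ * ρ j + K₂ * η j) * (x (i + 1) - x i) := by ring
          simpa [abs_of_pos hΔ] using key
      _ = K₁ * m₁ + K₂ * m₂ := by
          rw [← hm₁, ← hm₂, Finset.mul_sum, Finset.mul_sum, ← Finset.sum_add_distrib]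
          exact Finset.sum_congr rfl fun j _ => by ring
  refine ⟨hbound, ?_⟩
  have hM : 0 ≤ K₁ * m₁ + K₂ * m₂ := le_trans (abs_nonneg _) (hbound 0)
  calc ∑ i ∈ Finset.range (N - 1), (x (i + 1) - x i) * (dV i) ^ 2
      ≤ ∑ i ∈ Finset.range (N - 1), (x (i + 1) - x i) * (K₁ * m₁ + K₂ * m₂) ^ 2 := by
        apply Finset.sum_le_sum
        intro i _
        have hxi : 0 ≤ x (i + 1) - x i := le_of_lt (sub_pos.2 (hx i))
        have : (dV i) ^ 2 ≤ (K₁ * m₁ + K₂ * m₂) ^ 2 := by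
          rw [← sq_abs]
          exact pow_le_pow_left₀ (abs_nonneg _) (hbound i) 2
        exact mul_le_mul_of_nonneg_left this hxi
    _ = (∑ i ∈ Finset.range (N - 1), (x (i + 1) - x i)) * (K₁ * m₁ + K₂ * m₂) ^ 2 := by
        rw [← Finset.sum_mul]
    _ ≤ (b - a) * (K₁ * m₁ + K₂ * m₂) ^ 2 := by
        exact mul_le_mul_of_nonneg_right hxsum (by positivity)
end

section
/- Let (s_i)_{i=1}^N and (r_i)_{i=1}^N be real numbers satisfying, for each i, Δx_i |s_i| ≤ 2Δt·M·[ (|s_{i+1}| + |r_{i+1}| + |s_i| + |r_i|)/Δx_{i+1/2} + (|s_{i−1}| + |r_{i−1}| + |s_i| + |r_i|)/Δx_{i−1/2} ] and the analogous inequality for Δx_i |r_i| (with boundary conventions s₀ = s₁, s_{N+1} = s_N, etc.), where M ≥ 0, Δt > 0 and ξh ≤ Δx_i, Δx_{i±1/2} ≤ h. If 16 M Δt/(ξh)² < 1, then s_i = r_i = 0 for all i. -/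
open Real

/-- Contraction/uniqueness argument for the fully discrete implicit scheme:
if `(s_i)`, `(r_i)` satisfy the componentwise inequalities
`Δx_i |s_i| ≤ 2ΔtM[(|s_{i+1}|+|r_{i+1}|+|s_i|+|r_i|)/Δx_{i+1/2}
               + (|s_{i−1}|+|r_{i−1}|+|s_i|+|r_i|)/Δx_{i−1/2}]`
(and the analogous inequality for `r`), with boundary conventions
`s₀ = s₁, s_{N+1} = s_N` (same for `r`), mesh regularity `ξh ≤ Δx ≤ h`, and
`16MΔt/(ξh)² < 1`, then `s = r = 0`. Here `Δxh i` denotes `Δx_{i+1/2}`. -/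
theorem stmt_14 (N : ℕ) (hN : 1 ≤ N) (M Δt ξ h : ℝ)
    (hM : 0 ≤ M) (hΔt : 0 < Δt) (hξ : 0 < ξ) (hξ1 : ξ < 1) (hh : 0 < h)
    (Δx Δxh : ℕ → ℝ)
    (hΔx : ∀ i ∈ Finset.Icc 1 N, ξ * h ≤ Δx i ∧ Δx i ≤ h)
    (hΔxh : ∀ i ≤ N, ξ * h ≤ Δxh i ∧ Δxh i ≤ h)
    (s r : ℕ → ℝ)
    (hs0 : s 0 = s 1) (hsN : s (N + 1) = s N)
    (hr0 : r 0 = r 1) (hrN : r (N + 1) = r N)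
    (hsineq : ∀ i ∈ Finset.Icc 1 N,
      Δx i * |s i| ≤ 2 * Δt * M *
        ((|s (i + 1)| + |r (i + 1)| + |s i| + |r i|) / Δxh i
          + (|s (i - 1)| + |r (i - 1)| + |s i| + |r i|) / Δxh (i - 1)))
    (hrineq : ∀ i ∈ Finset.Icc 1 N,
      Δx i * |r i| ≤ 2 * Δt * M *
        ((|s (i + 1)| + |r (i + 1)| + |s i| + |r i|) / Δxh i
          + (|s (i - 1)| + |r (i - 1)| + |s i| + |r i|) / Δxh (i - 1)))
    (hCFL : 16 * M * Δt / (ξ * h) ^ 2 < 1) :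
    ∀ i ∈ Finset.Icc 1 N, s i = 0 ∧ r i = 0 := by
  set a : ℕ → ℝ := fun i => |s i| + |r i| with ha_def
  have ha : ∀ i, 0 ≤ a i := fun i => add_nonneg (abs_nonneg _) (abs_nonneg _)
  have hξh : 0 < ξ * h := mul_pos hξ hh
  -- key pointwise bound
  have key : ∀ i ∈ Finset.Icc 1 N,
      (ξ * h) * a i ≤ (4 * Δt * M / (ξ * h)) * (a (i + 1) + 2 * a i + a (i - 1)) := by
    intro i hi
    obtain ⟨hi1, hiN⟩ := Finset.mem_Icc.mp hi
    have hΔxi := hΔx i hi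
    have hΔxhi := hΔxh i hiN
    have hΔxhi' := hΔxh (i - 1) (le_trans (Nat.sub_le i 1) hiN)
    have hB1 : (|s (i + 1)| + |r (i + 1)| + |s i| + |r i|) / Δxh i
        ≤ (a (i + 1) + a i) / (ξ * h) := by
      have hnum : |s (i + 1)| + |r (i + 1)| + |s i| + |r i| = a (i + 1) + a i := by
        simp [ha_def]; ring
      rw [hnum]
      exact div_le_div_of_nonneg_left (add_nonneg (ha _) (ha _)) hξh hΔxhi.1
    have hB2 : (|s (i - 1)| + |r (i - 1)| + |s i| + |r i|) / Δxh (i - 1)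
        ≤ (a (i - 1) + a i) / (ξ * h) := by
      have hnum : |s (i - 1)| + |r (i - 1)| + |s i| + |r i| = a (i - 1) + a i := by
        simp [ha_def]; ring
      rw [hnum]
      exact div_le_div_of_nonneg_left (add_nonneg (ha _) (ha _)) hξh hΔxhi'.1
    have hMt : (0:ℝ) ≤ 2 * Δt * M := by positivity
    have h1 := hsineq i hi
    have h2 := hrineq i hi
    have hstep : Δx i * a i ≤ 2 * Δt * M *
        ((a (i + 1) + a i) / (ξ * h) + (a (i - 1) + a i) / (ξ * h)) + 2 * Δt * M *
        ((a (i + 1) + a i) / (ξ * h) + (a (i - 1) + a i) / (ξ * h)) := by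
      have hb := add_le_add hB1 hB2
      have h3 := mul_le_mul_of_nonneg_left hb hMt
      have := add_le_add (h1.trans h3) (h2.trans h3)
      calc Δx i * a i = Δx i * |s i| + Δx i * |r i| := by simp [ha_def]; ring
        _ ≤ _ := this
    have hlow : (ξ * h) * a i ≤ Δx i * a i :=
      mul_le_mul_of_nonneg_right hΔxi.1 (ha i)
    calc (ξ * h) * a i ≤ Δx i * a i := hlow
      _ ≤ _ := hstep
      _ = (4 * Δt * M / (ξ * h)) * (a (i + 1) + 2 * a i + a (i - 1)) := by
          field_simp; ring
  -- sum everything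
  set S : ℝ := ∑ i ∈ Finset.Icc 1 N, a i with hS_def
  have hSnn : 0 ≤ S := Finset.sum_nonneg fun i _ => ha i
  have hsum := Finset.sum_le_sum key
  rw [← Finset.mul_sum, ← Finset.mul_sum] at hsum
  -- the neighbor sum equals 4S
  have hsum4 : ∑ i ∈ Finset.Icc 1 N, (a (i + 1) + 2 * a i + a (i - 1)) = 4 * S := by
    have hIcc : ∀ f : ℕ → ℝ, ∑ i ∈ Finset.Icc 1 N, f i = ∑ i ∈ Finset.range N, f (1 + i) := by
      intro f
      rw [← Finset.Ico_add_one_right_eq_Icc, Finset.sum_Ico_eq_sum_range]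
      simp
    rw [hIcc, hS_def, hIcc]
    have hre : ∀ i ∈ Finset.range N,
        a (1 + i + 1) + 2 * a (1 + i) + a (1 + i - 1)
        = 4 * a (1 + i) + ((a (i + 2) - a (i + 1)) - (a (i + 1) - a i)) := by
      intro i _
      have : 1 + i - 1 = i := by omega
      rw [this]
      have e1 : 1 + i + 1 = i + 2 := by omega
      have e2 : 1 + i = i + 1 := by omega
      rw [e1, e2]; ring
    rw [Finset.sum_congr rfl hre, Finset.sum_add_distrib, Finset.sum_sub_distrib,
      Finset.sum_range_sub (fun i => a (i + 1)), Finset.sum_range_sub a,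
      ← Finset.mul_sum]
    have : a (N + 1) = a N := by simp [ha_def, hsN, hrN]
    have h0 : a 0 = a 1 := by simp [ha_def, hs0, hr0]
    rw [this, h0]; ring
  rw [hsum4] at hsum
  -- conclude S = 0
  have hS0 : S = 0 := by
    rcases eq_or_lt_of_le hSnn with hS | hS
    · exact hS.symm
    · exfalso
      rw [← hS_def] at hsum
      have hc : 16 * M * Δt / (ξ * h) < ξ * h := by
        rw [div_lt_iff₀ hξh]
        have := (div_lt_one (by positivity : (0:ℝ) < (ξ * h) ^ 2)).mp hCFL
        nlinarith [sq_nonneg (ξ * h)]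
      have h2 : 16 * M * Δt / (ξ * h) * S < (ξ * h) * S := mul_lt_mul_of_pos_right hc hS
      have h3 : 4 * Δt * M / (ξ * h) * (4 * S) = 16 * M * Δt / (ξ * h) * S := by ring
      linarith [h3 ▸ hsum]
  -- each term vanishes
  intro i hi
  have hall := (Finset.sum_eq_zero_iff_of_nonneg fun i _ => ha i).mp hS0 i hi
  have hall' : |s i| + |r i| = 0 := hall
  have h1 := abs_nonneg (s i)
  have h2 := abs_nonneg (r i)
  exact ⟨abs_eq_zero.mp (by linarith), abs_eq_zero.mp (by linarith)⟩
end

section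
/- Let v ∈ ℝ and decompose v = v⁺ + v⁻ with v⁺ = max(v,0), v⁻ = min(v,0). Let a, b ≥ 0 and define the upwind product F = v⁺ a + v⁻ b. Then F = v·a + v⁻ (b − a) = v·b + v⁺ (a − b), and |F| ≤ |v| max(a,b). Moreover if a, b > 0 then F (log b − log a) ≤ v L(a,b)(log b − log a) = v(b − a), where L is the logarithmic mean. -/
open Real

lemma max_zero_add_min_zero {M : Type*} [LinearOrder M] [AddCommMonoid M] (v : M) :
    max v 0 + min v 0 = v := by
  rw [max_add_min, add_zero]

section Upwind

variable {R : Type*} [CommRing R] [LinearOrder R] [IsStrictOrderedRing R]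

lemma max_zero_sub_min_zero (v : R) : max v 0 - min v 0 = |v| := by
  rcases le_total 0 v with h | h <;> simp [h, abs_of_nonneg, abs_of_nonpos]

theorem upwind_eq_mul_left (v a b : R) :
    max v 0 * a + min v 0 * b = v * a + min v 0 * (b - a) := by
  linear_combination a * max_zero_add_min_zero v

theorem upwind_eq_mul_right (v a b : R) :
    max v 0 * a + min v 0 * b = v * b + max v 0 * (a - b) := by
  linear_combination b * max_zero_add_min_zero v

theorem abs_upwind_le {v a b : R} (ha : 0 ≤ a) (hb : 0 ≤ b) :
    |max v 0 * a + min v 0 * b| ≤ |v| * max a b := by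
  have hmax : 0 ≤ max v 0 := le_max_right v 0
  have hmin : min v 0 ≤ 0 := min_le_right v 0
  calc |max v 0 * a + min v 0 * b| ≤ |max v 0 * a| + |min v 0 * b| := abs_add_le _ _
    _ = max v 0 * a + -min v 0 * b := by
        rw [abs_mul, abs_mul, abs_of_nonneg hmax, abs_of_nonneg ha, abs_of_nonpos hmin,
          abs_of_nonneg hb]
    _ ≤ max v 0 * max a b + -min v 0 * max a b := by
        gcongr
        · exact le_max_left a b
        · linarith
        · exact le_max_right a b
    _ = |v| * max a b := by rw [← max_zero_sub_min_zero]; ring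

end Upwind

theorem mul_log_sub_log_le_sub {a b : ℝ} (ha : 0 < a) (hb : 0 < b) :
    a * (log b - log a) ≤ b - a := by
  have h := log_le_sub_one_of_pos (div_pos hb ha)
  rw [log_div hb.ne' ha.ne'] at h
  calc a * (log b - log a) ≤ a * (b / a - 1) := by gcongr
    _ = b - a := by field_simp

theorem sub_le_mul_log_sub_log {a b : ℝ} (ha : 0 < a) (hb : 0 < b) :
    b - a ≤ b * (log b - log a) := by
  linarith [mul_log_sub_log_le_sub hb ha]

/-- Upwinding only decreases the entropy flux: `v⁺` meets the lower bound `a` of the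
logarithmic mean and `v⁻ ≤ 0` meets the upper bound `b`. -/
theorem upwind_mul_log_sub_log_le (v : ℝ) {a b : ℝ} (ha : 0 < a) (hb : 0 < b) :
    (max v 0 * a + min v 0 * b) * (log b - log a) ≤ v * (b - a) := by
  have hpos := mul_le_mul_of_nonneg_left (mul_log_sub_log_le_sub ha hb) (le_max_right v 0)
  have hneg := mul_le_mul_of_nonpos_left (sub_le_mul_log_sub_log ha hb) (min_le_right v 0)
  calc (max v 0 * a + min v 0 * b) * (log b - log a)
        = max v 0 * (a * (log b - log a)) + min v 0 * (b * (log b - log a)) := by ring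
    _ ≤ max v 0 * (b - a) + min v 0 * (b - a) := add_le_add hpos hneg
    _ = v * (b - a) := by rw [← add_mul, max_zero_add_min_zero]

noncomputable def logMean (a b : ℝ) : ℝ :=
  if a = b then a else (b - a) / (log b - log a)

theorem logMean_mul_log_sub_log {a b : ℝ} (ha : 0 < a) (hb : 0 < b) :
    logMean a b * (log b - log a) = b - a := by
  by_cases hab : a = b
  · simp [logMean, hab]
  · have hlog : log b - log a ≠ 0 :=
      sub_ne_zero.mpr fun h => hab (log_injOn_pos ha hb h.symm)
    rw [logMean, if_neg hab, div_mul_cancel₀ _ hlog]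

/-- Algebraic identities for the upwind flux `F = v⁺a + v⁻b` with `v⁺ = max(v,0)`,
`v⁻ = min(v,0)` and nonnegative states `a, b`:
`F = v·a + v⁻(b − a)`, `F = v·b + v⁺(a − b)`, `|F| ≤ |v|·max(a,b)`; moreover if
`a, b > 0` then `F(log b − log a) ≤ v L(a,b)(log b − log a) = v(b − a)`,
where `L` is the logarithmic mean. -/
theorem stmt_18 (v a b F L : ℝ) (ha : 0 ≤ a) (hb : 0 ≤ b)
    (hF : F = max v 0 * a + min v 0 * b)
    (hL : L = if a = b then a else (b - a) / (Real.log b - Real.log a)) :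
    F = v * a + min v 0 * (b - a) ∧
    F = v * b + max v 0 * (a - b) ∧
    |F| ≤ |v| * max a b ∧
    (0 < a → 0 < b →
      F * (Real.log b - Real.log a) ≤ v * L * (Real.log b - Real.log a) ∧
      v * L * (Real.log b - Real.log a) = v * (b - a)) := by
  subst hF
  refine ⟨upwind_eq_mul_left v a b, upwind_eq_mul_right v a b, abs_upwind_le ha hb,
    fun ha' hb' => ?_⟩
  have hmean : v * L * (log b - log a) = v * (b - a) := by
    rw [mul_assoc, show L = logMean a b from hL, logMean_mul_log_sub_log ha' hb']
  exact ⟨hmean ▸ upwind_mul_log_sub_log_le v ha' hb', hmean⟩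
end
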